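/- arXiv:quant-ph/0506054 — 3 statements merged into one kernel-verified Lean document; each statement's English description precedes it below -/
import Mathlib

section
/- Let p be a prime, n ≥ 1 and 0 ≤ k ≤ n. If ξ_1,…,ξ_{n−k} ∈ (ZMod p)^{2n} are linearly independent over ZMod p and pairwise symplectically orthogonal (⟨ξ_i,ξ_j⟩ = 0 for all i,j), then there exist vectors ξ_{n−k+1},…,ξ_n and η_1,…,η_n in (ZMod p)^{2n} such that ξ_1,…,ξ_n,η_1,…,η_n is a hyperbolic basis of (ZMod p)^{2n}. -/
open scoped BigOperators

/-- The phase space `(ZMod p)^n × (ZMod p)^n`, representing `(ZMod p)^{2n}`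
written as pairs `(a|b)`. -/
abbrev PV (p n : ℕ) := (Fin n → ZMod p) × (Fin n → ZMod p)

/-- The symplectic inner product `⟨x,y⟩ = ∑ i, (b i * c i - a i * d i)`
for `x = (a|b)`, `y = (c|d)`. -/
def symp {p n : ℕ} (x y : PV p n) : ZMod p :=
  ∑ i, (x.2 i * y.1 i - x.1 i * y.2 i)

/-- `ξ_1,…,ξ_n, η_1,…,η_n` form a hyperbolic basis of `(ZMod p)^{2n}`. -/
def IsHyperbolicBasis {p n : ℕ} (ξ η : Fin n → PV p n) : Prop :=
  LinearIndependent (ZMod p) (Sum.elim ξ η) ∧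
  Submodule.span (ZMod p) (Set.range (Sum.elim ξ η)) = ⊤ ∧
  (∀ i j, symp (ξ i) (η j) = if i = j then 1 else 0) ∧
  (∀ i j, symp (ξ i) (ξ j) = 0) ∧
  (∀ i j, symp (η i) (η j) = 0)

/-- Symplectic orthogonal complement `W^⊥` of a submodule `W`. -/
def sympOrtho {p n : ℕ} (W : Submodule (ZMod p) (PV p n)) :
    Submodule (ZMod p) (PV p n) where
  carrier := {y | ∀ x ∈ W, symp x y = 0}
  zero_mem' := by intro x hx; simp [symp]
  add_mem' := by
    intro a b ha hb x hx
    have h : symp x (a + b) = symp x a + symp x b := by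
      unfold symp
      rw [← Finset.sum_add_distrib]
      refine Finset.sum_congr rfl ?_
      intro i _
      simp only [Prod.fst_add, Prod.snd_add, Pi.add_apply]
      ring
    rw [h, ha x hx, hb x hx, add_zero]
  smul_mem' := by
    intro c a ha x hx
    have h : symp x (c • a) = c * symp x a := by
      unfold symp
      rw [Finset.mul_sum]
      refine Finset.sum_congr rfl ?_
      intro i _
      simp only [Prod.smul_fst, Prod.smul_snd, Pi.smul_apply, smul_eq_mul]
      ring
    rw [h, ha x hx, mul_zero]

/-- `ω = exp(2πi/p)`. -/
noncomputable def omg (p : ℕ) : ℂ := Complex.exp (2 * Real.pi * Complex.I / p)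

/-- The matrix `XZⁿ(v)` for `v = (a|b)`: entry `(r,c)` equals `ω^{b·c}`
if `r = c + a`, and `0` otherwise. -/
noncomputable def XZ {p n : ℕ} (v : PV p n) :
    Matrix (Fin n → ZMod p) (Fin n → ZMod p) ℂ :=
  fun r c => if r = c + v.1 then omg p ^ (∑ i, v.2 i * c i).val else 0

/-- The standard basis vector `δ_u`. -/
def delta {p n : ℕ} (u : Fin n → ZMod p) : (Fin n → ZMod p) → ℂ :=
  fun v => if v = u then 1 else 0

/-- Ordered product `∏_{i=1}^n (M i)^{u_i}` of matrices, powers via integer lifts. -/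
noncomputable def prodPow {p n : ℕ} [NeZero p]
    (M : Fin n → Matrix (Fin n → ZMod p) (Fin n → ZMod p) ℂ)
    (u : Fin n → ZMod p) : Matrix (Fin n → ZMod p) (Fin n → ZMod p) ℂ :=
  ((List.finRange n).map (fun i => (M i) ^ (u i).val)).prod

/-- Splice `e ∈ (ZMod p)^{n-k}` and `x ∈ (ZMod p)^k` into a vector of `(ZMod p)^n`,
identifying `(ZMod p)^n` with `(ZMod p)^{n-k} × (ZMod p)^k`. -/
def splice {p n k : ℕ} (hk : k ≤ n) (e : Fin (n - k) → ZMod p)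
    (x : Fin k → ZMod p) : Fin n → ZMod p :=
  fun i => Fin.append e x (Fin.cast (by omega) i)

/-- The index `n - k + i` of `Fin n`, for `i : Fin k`. -/
def lastIdx {n k : ℕ} (hk : k ≤ n) (i : Fin k) : Fin n :=
  ⟨n - k + i.1, by have := i.2; omega⟩

/-- Kronecker (tensor) product of two vectors. -/
def vecKron {ι : Type*} (f g : ι → ℂ) : ι × ι → ℂ := fun q => f q.1 * g q.2

/-- Entrywise complex conjugate of a vector. -/
def conjVec {ι : Type*} (f : ι → ℂ) : ι → ℂ := fun i => (starRingEnd ℂ) (f i)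

/-! Let `B` be a nondegenerate alternating form on a `2n`-dimensional space. An independent
isotropic family `ξ` of size `m < n` spans `W` with `dim W^⊥ = 2n - m > m`, so it extends by any
vector of `W^⊥ \ W`, until it has `n` members. Nondegeneracy makes `v ↦ (B (ξ i) v)ᵢ` surjective,
which gives `η` with `B (ξ i) (η j) = δᵢⱼ`; a triangular correction by multiples of the `ξ l` makes
`η` isotropic. Pairing against `(η, -ξ)` shows that `(ξ, η)` is independent, hence a basis. -/

open Module Submodule

namespace LinearMap

variable {R M N ι : Type*} [CommRing R] [AddCommGroup M] [Module R M] [AddCommGroup N]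
  [Module R N] [Fintype ι] [DecidableEq ι]

theorem linearIndependent_of_apply_eq_ite (B : M →ₗ[R] N →ₗ[R] R) {f : ι → M} {g : ι → N}
    (h : ∀ i j, B (f i) (g j) = if i = j then 1 else 0) : LinearIndependent R f := by
  refine Fintype.linearIndependent_iff.mpr fun c hc j => ?_
  simpa [map_sum, h] using congrArg (fun v => B v (g j)) hc

end LinearMap

namespace LinearMap.BilinForm

section CommRing

variable {R M ι : Type*} [CommRing R] [AddCommGroup M] [Module R M] {B : LinearMap.BilinForm R M}

theorem mem_orthogonal_span_range_iff {ξ : ι → M} {v : M} :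
    v ∈ B.orthogonal (span R (Set.range ξ)) ↔ ∀ i, B (ξ i) v = 0 := by
  change span R (Set.range ξ) ≤ LinearMap.ker (B.flip v) ↔ _
  rw [span_le, Set.range_subset_iff]
  rfl

theorem exists_isotropic_apply_eq_ite (hAlt : B.IsAlt) [Fintype ι] [LinearOrder ι]
    {ξ η : ι → M} (hiso : ∀ i j, B (ξ i) (ξ j) = 0)
    (hη : ∀ i j, B (ξ i) (η j) = if i = j then 1 else 0) :
    ∃ η' : ι → M, (∀ i j, B (ξ i) (η' j) = if i = j then 1 else 0) ∧
      ∀ i j, B (η' i) (η' j) = 0 := by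
  -- the correction changes `B (η i) (η j)` by `c j i - c i j`, which cancels it for `i < j`;
  -- the case `j < i` then follows by skew-symmetry
  let c : ι → ι → R := fun l j => if l < j then B (η l) (η j) else 0
  have hξη' : ∀ i j, B (ξ i) (η j + ∑ l, c l j • ξ l) = if i = j then 1 else 0 := by
    simp [hiso, hη]
  refine ⟨fun j => η j + ∑ l, c l j • ξ l, hξη', fun i j => ?_⟩
  have hηξ : ∀ i l, B (η i) (ξ l) = -if l = i then 1 else 0 := fun i l => by
    rw [← hη]; exact (LinearMap.IsAlt.neg hAlt _ _).symm
  have hcorr :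
      B (η i + ∑ l, c l i • ξ l) (η j + ∑ l, c l j • ξ l) = B (η i) (η j) - c i j + c j i := by
    simp [hξη', hηξ, sub_eq_add_neg]
  rw [hcorr]
  rcases lt_trichotomy i j with h | rfl | h
  · simp [c, h, h.not_gt]
  · simp [c, hAlt.self_eq_zero]
  · simp [c, h, h.not_gt, ← LinearMap.IsAlt.neg hAlt (η i) (η j)]

theorem linearIndependent_sumElim_of_apply_eq_ite (hAlt : B.IsAlt) [Fintype ι] [DecidableEq ι]
    {ξ η : ι → M} (hξη : ∀ i j, B (ξ i) (η j) = if i = j then 1 else 0)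
    (hξ : ∀ i j, B (ξ i) (ξ j) = 0) (hη : ∀ i j, B (η i) (η j) = 0) :
    LinearIndependent R (Sum.elim ξ η) := by
  refine B.linearIndependent_of_apply_eq_ite (g := Sum.elim η (-ξ)) ?_
  rintro (i | i) (j | j)
  · simp [hξη]
  · simp [hξ]
  · simp [hη]
  · simp only [Sum.elim_inr, Pi.neg_apply, map_neg, LinearMap.IsAlt.neg hAlt, hξη, Sum.inr.injEq]
    exact if_congr eq_comm rfl rfl

end CommRing

variable {K V : Type*} [Field K] [AddCommGroup V] [Module K V] [FiniteDimensional K V]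
  {B : LinearMap.BilinForm K V}

theorem exists_orthogonal_notMem_span (hB : B.Nondegenerate) {m : ℕ} {ξ : Fin m → V}
    (hli : LinearIndependent K ξ) (hm : 2 * m < finrank K V) :
    ∃ v, v ∉ span K (Set.range ξ) ∧ ∀ i, B (ξ i) v = 0 := by
  have hW : finrank K (span K (Set.range ξ)) = m := by
    rw [finrank_span_eq_card hli, Fintype.card_fin]
  have hnle : ¬ B.orthogonal (span K (Set.range ξ)) ≤ span K (Set.range ξ) := fun hle => by
    have := finrank_mono hle
    rw [finrank_orthogonal hB] at this
    omega
  obtain ⟨v, hvW, hv⟩ := SetLike.not_le_iff_exists.mp hnle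
  exact ⟨v, hv, mem_orthogonal_span_range_iff.mp hvW⟩

theorem exists_isotropic_extension (hB : B.Nondegenerate) (hAlt : B.IsAlt) {n m : ℕ}
    (hn : finrank K V = 2 * n) (hmn : m ≤ n) {ξ : Fin m → V}
    (hli : LinearIndependent K ξ) (hiso : ∀ i j, B (ξ i) (ξ j) = 0) :
    ∃ Ξ : Fin n → V, (∀ i, Ξ (Fin.castLE hmn i) = ξ i) ∧ LinearIndependent K Ξ ∧
      ∀ i j, B (Ξ i) (Ξ j) = 0 := by
  induction h : n - m generalizing m with
  | zero =>
    obtain rfl : m = n := by omega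
    exact ⟨ξ, fun i => by simp, hli, hiso⟩
  | succ d ih =>
    obtain ⟨v, hv, hξv⟩ := exists_orthogonal_notMem_span hB hli (by omega)
    let ξ' : Fin (m + 1) → V := Fin.snoc ξ v
    have hisov : ∀ i j, B (ξ' i) (ξ' j) = 0 := fun i j => by
      induction i using Fin.lastCases <;> induction j using Fin.lastCases <;>
        simp [ξ', hiso, hξv, hAlt.self_eq_zero, hAlt.eq_iff.mp (hξv _)]
    obtain ⟨Ξ, hΞ, hliΞ, hisoΞ⟩ :=
      ih (by omega) (linearIndependent_finSnoc.mpr ⟨hli, hv⟩) hisov (by omega)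
    refine ⟨Ξ, fun i => ?_, hliΞ, hisoΞ⟩
    simpa using hΞ i.castSucc

theorem exists_apply_eq_ite (hB : B.Nondegenerate) {ι : Type*} [Fintype ι] [DecidableEq ι]
    {ξ : ι → V} (hli : LinearIndependent K ξ) :
    ∃ η : ι → V, ∀ i j, B (ξ i) (η j) = if i = j then 1 else 0 := by
  let T : V →ₗ[K] ι → K := LinearMap.pi fun i => B (ξ i)
  have hker : LinearMap.ker T = B.orthogonal (span K (Set.range ξ)) := by
    ext v
    rw [mem_orthogonal_span_range_iff]
    simp [T, funext_iff]
  have hcard : Fintype.card ι ≤ finrank K V := hli.fintype_card_le_finrank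
  have hT : Function.Surjective T := by
    rw [← LinearMap.range_eq_top]
    apply Submodule.eq_top_of_finrank_eq
    have := LinearMap.finrank_range_add_finrank_ker T
    rw [hker, finrank_orthogonal hB, finrank_span_eq_card hli] at this
    rw [finrank_fintype_fun_eq_card]
    omega
  choose η hη using fun j => hT (Pi.single j 1)
  refine ⟨η, fun i j => ?_⟩
  simpa [T, Pi.single_apply, eq_comm] using congrFun (hη j) i

theorem exists_hyperbolic_extension (hB : B.Nondegenerate) (hAlt : B.IsAlt) {n m : ℕ}
    (hn : finrank K V = 2 * n) (hmn : m ≤ n) {ξ : Fin m → V}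
    (hli : LinearIndependent K ξ) (hiso : ∀ i j, B (ξ i) (ξ j) = 0) :
    ∃ Ξ η : Fin n → V, (∀ i, Ξ (Fin.castLE hmn i) = ξ i) ∧
      LinearIndependent K (Sum.elim Ξ η) ∧ span K (Set.range (Sum.elim Ξ η)) = ⊤ ∧
      (∀ i j, B (Ξ i) (η j) = if i = j then 1 else 0) ∧
      (∀ i j, B (Ξ i) (Ξ j) = 0) ∧ ∀ i j, B (η i) (η j) = 0 := by
  obtain ⟨Ξ, hΞξ, hliΞ, hisoΞ⟩ := exists_isotropic_extension hB hAlt hn hmn hli hiso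
  obtain ⟨η₀, hη₀⟩ := exists_apply_eq_ite hB hliΞ
  obtain ⟨η, hΞη, hisoη⟩ := exists_isotropic_apply_eq_ite hAlt hisoΞ hη₀
  have hliΞη := linearIndependent_sumElim_of_apply_eq_ite hAlt hΞη hisoΞ hisoη
  refine ⟨Ξ, η, hΞξ, hliΞη, hliΞη.span_eq_top_of_card_eq_finrank' ?_, hΞη, hisoΞ, hisoη⟩
  simp [hn, two_mul]

end LinearMap.BilinForm

section Symplectic

variable {p n : ℕ}

theorem symp_add_left (x y z : PV p n) : symp (x + y) z = symp x z + symp y z := by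
  simp only [symp, ← Finset.sum_add_distrib, Prod.fst_add, Prod.snd_add, Pi.add_apply]
  exact Finset.sum_congr rfl fun _ _ => by ring

theorem symp_add_right (x y z : PV p n) : symp x (y + z) = symp x y + symp x z := by
  simp only [symp, ← Finset.sum_add_distrib, Prod.fst_add, Prod.snd_add, Pi.add_apply]
  exact Finset.sum_congr rfl fun _ _ => by ring

theorem symp_smul_left (c : ZMod p) (x y : PV p n) : symp (c • x) y = c * symp x y := by
  simp only [symp, Finset.mul_sum, Prod.smul_fst, Prod.smul_snd, Pi.smul_apply, smul_eq_mul]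
  exact Finset.sum_congr rfl fun _ _ => by ring

theorem symp_smul_right (c : ZMod p) (x y : PV p n) : symp x (c • y) = c * symp x y := by
  simp only [symp, Finset.mul_sum, Prod.smul_fst, Prod.smul_snd, Pi.smul_apply, smul_eq_mul]
  exact Finset.sum_congr rfl fun _ _ => by ring

def sympForm (p n : ℕ) : LinearMap.BilinForm (ZMod p) (PV p n) :=
  LinearMap.mk₂ (ZMod p) symp symp_add_left symp_smul_left symp_add_right symp_smul_right

theorem sympForm_isAlt : (sympForm p n).IsAlt := fun x => show symp x x = 0 from
  Finset.sum_eq_zero fun i _ => sub_eq_zero.mpr (mul_comm (x.2 i) (x.1 i))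

theorem sympForm_nondegenerate : (sympForm p n).Nondegenerate := by
  have hRefl := LinearMap.IsAlt.isRefl (B := sympForm p n) sympForm_isAlt
  refine hRefl.nondegenerate_iff_separatingLeft.mpr fun x hx => ?_
  ext i
  · simpa [sympForm, symp, Pi.single_apply] using hx (0, Pi.single i 1)
  · simpa [sympForm, symp, Pi.single_apply] using hx (Pi.single i 1, 0)

theorem finrank_PV [Fact p.Prime] : finrank (ZMod p) (PV p n) = 2 * n := by
  simp [two_mul]

end Symplectic

theorem stmt0_general (p n k : ℕ) [Fact p.Prime]
    (ξ : Fin (n - k) → PV p n)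
    (hli : LinearIndependent (ZMod p) ξ)
    (horth : ∀ i j, symp (ξ i) (ξ j) = 0) :
    ∃ Ξ η : Fin n → PV p n,
      (∀ i : Fin (n - k), Ξ (Fin.castLE (Nat.sub_le n k) i) = ξ i) ∧
      IsHyperbolicBasis Ξ η := by
  obtain ⟨Ξ, η, hΞξ, hΞη⟩ := LinearMap.BilinForm.exists_hyperbolic_extension
    (B := sympForm p n) sympForm_nondegenerate sympForm_isAlt finrank_PV (Nat.sub_le n k) hli horth
  exact ⟨Ξ, η, hΞξ, hΞη⟩

/-- linearly independent, pairwise symplectically orthogonal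
vectors `ξ_1,…,ξ_{n-k}` extend to a hyperbolic basis of `(ZMod p)^{2n}`. -/
theorem stmt0 (p n k : ℕ) [Fact p.Prime] (hn : 1 ≤ n) (hk : k ≤ n)
    (ξ : Fin (n - k) → PV p n)
    (hli : LinearIndependent (ZMod p) ξ)
    (horth : ∀ i j, symp (ξ i) (ξ j) = 0) :
    ∃ Ξ η : Fin n → PV p n,
      (∀ i : Fin (n - k), Ξ (Fin.castLE (Nat.sub_le n k) i) = ξ i) ∧
      IsHyperbolicBasis Ξ η :=
  stmt0_general p n k ξ hli horth
end

section
/- For every prime p, every n ≥ 1 and all x, y ∈ (ZMod p)^{2n}, the matrices XZⁿ(x) and XZⁿ(y) satisfy the commutation relation XZⁿ(x)·XZⁿ(y) = ω^{⟨x,y⟩}·XZⁿ(y)·XZⁿ(x), where the exponent ⟨x,y⟩ ∈ ZMod p is interpreted via any integer lift. -/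
open scoped BigOperators

lemma omg_pow_p (p : ℕ) [Fact p.Prime] : omg p ^ p = 1 := by
  have hp : (p : ℂ) ≠ 0 := by
    exact_mod_cast (Nat.cast_ne_zero (R := ℂ)).2 (Fact.out (p := p.Prime)).ne_zero
  rw [omg, ← Complex.exp_nat_mul]
  rw [show (p : ℂ) * (2 * Real.pi * Complex.I / p) = 2 * Real.pi * Complex.I by
    field_simp]
  simpa [mul_comm] using Complex.exp_two_pi_mul_I

lemma omg_pow_mod (p : ℕ) [Fact p.Prime] (k : ℕ) : omg p ^ (k % p) = omg p ^ k := by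
  conv_rhs => rw [← Nat.div_add_mod k p]
  rw [pow_add, pow_mul, omg_pow_p, one_pow, one_mul]

lemma omg_pow_val_add (p : ℕ) [Fact p.Prime] (a b : ZMod p) :
    omg p ^ (a + b).val = omg p ^ a.val * omg p ^ b.val := by
  haveI : NeZero p := ⟨(Fact.out (p := p.Prime)).ne_zero⟩
  rw [ZMod.val_add, omg_pow_mod, pow_add]

/-- the commutation relation
`XZⁿ(x)·XZⁿ(y) = ω^{⟨x,y⟩}·XZⁿ(y)·XZⁿ(x)`. -/
theorem stmt2 (p n : ℕ) [Fact p.Prime] (hn : 1 ≤ n) (x y : PV p n) :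
    XZ x * XZ y = omg p ^ (symp x y).val • (XZ y * XZ x) := by
  ext r c
  simp only [Matrix.mul_apply, XZ, Matrix.smul_apply, smul_eq_mul, Finset.mul_sum,
    ite_mul, zero_mul, mul_ite, mul_zero]
  rw [Finset.sum_ite_eq' Finset.univ (c + y.1), Finset.sum_ite_eq' Finset.univ (c + x.1)]
  simp only [Finset.mem_univ, if_true]
  by_cases h : r = c + y.1 + x.1
  · rw [if_pos h, if_pos (by rw [h]; abel)]
    rw [← omg_pow_val_add, ← omg_pow_val_add, ← omg_pow_val_add]
    congr 1
    congr 1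
    simp only [symp, Pi.add_apply, ← Finset.sum_add_distrib]
    refine Finset.sum_congr rfl fun i _ => ?_
    ring
  · rw [if_neg h, if_neg (by intro hc; apply h; rw [hc]; abel)]
end

section
/- Let p be a prime, 0 ≤ k ≤ n, and let ξ_1,…,ξ_n,η_1,…,η_n and ξ'_1,…,ξ'_n,η'_1,…,η'_n be two hyperbolic bases of (ZMod p)^{2n} with ξ_i = ξ'_i for 1 ≤ i ≤ n−k; let C be the span of ξ_1,…,ξ_{n−k} and C^⊥ its symplectic orthogonal complement. Suppose the two bases define the same map g, i.e., for every u ∈ C^⊥ and every (ℓ,m) ∈ (ZMod p)^k × (ZMod p)^k: u − Σ_{i=1}^k ℓ_i·η_{n−k+i} − Σ_{i=1}^k m_i·ξ_{n−k+i} ∈ C if and only if u − Σ_{i=1}^k ℓ_i·η'_{n−k+i} − Σ_{i=1}^k m_i·ξ'_{n−k+i} ∈ C. Then ξ_i − ξ'_i ∈ C and η_i − η'_i ∈ C for all n−k+1 ≤ i ≤ n. -/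
open scoped BigOperators

/-- if two hyperbolic bases extending `ξ_1,…,ξ_{n-k}` define the
same map `g`, then they agree modulo `C`. -/
theorem stmt13 (p n k : ℕ) [Fact p.Prime] (hk : k ≤ n)
    (ξ η ξ' η' : Fin n → PV p n)
    (hb : IsHyperbolicBasis ξ η) (hb' : IsHyperbolicBasis ξ' η')
    (hagree : ∀ i : Fin n, (i : ℕ) < n - k → ξ i = ξ' i) :
    let C : Submodule (ZMod p) (PV p n) :=
      Submodule.span (ZMod p) (ξ '' {i | (i : ℕ) < n - k})
    (∀ u ∈ sympOrtho C, ∀ lm : (Fin k → ZMod p) × (Fin k → ZMod p),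
      (u - (∑ i, lm.1 i • η (lastIdx hk i)) -
          (∑ i, lm.2 i • ξ (lastIdx hk i)) ∈ C ↔
       u - (∑ i, lm.1 i • η' (lastIdx hk i)) -
          (∑ i, lm.2 i • ξ' (lastIdx hk i)) ∈ C)) →
    ∀ i : Fin n, n - k ≤ (i : ℕ) → ξ i - ξ' i ∈ C ∧ η i - η' i ∈ C := by
  intro C hg i hi
  obtain ⟨_, _, hξη, hξξ, hηη⟩ := hb
  obtain ⟨_, _, hξη', hξξ', hηη'⟩ := hb'
  have hi2 := i.2
  set i₀ : Fin k := ⟨(i : ℕ) - (n - k), by omega⟩ with hi₀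
  have hlast : lastIdx hk i₀ = i := by
    simp only [lastIdx, Fin.ext_iff, hi₀]; omega
  have hortho : ∀ v : PV p n, (∀ j : Fin n, (j : ℕ) < n - k → symp (ξ j) v = 0) →
      v ∈ sympOrtho C := by
    intro v hv x hx
    induction hx using Submodule.span_induction with
    | mem x hx => obtain ⟨j, hj, rfl⟩ := hx; exact hv j hj
    | zero => simp [symp]
    | add x y _ _ hx hy =>
        have h : symp (x + y) v = symp x v + symp y v := by
          unfold symp; rw [← Finset.sum_add_distrib]
          refine Finset.sum_congr rfl fun i _ => ?_
          simp only [Prod.fst_add, Prod.snd_add, Pi.add_apply]; ring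
        rw [h, hx, hy, add_zero]
    | smul c x _ hx =>
        have h : symp (c • x) v = c * symp x v := by
          unfold symp; rw [Finset.mul_sum]
          refine Finset.sum_congr rfl fun i _ => ?_
          simp only [Prod.smul_fst, Prod.smul_snd, Pi.smul_apply, smul_eq_mul]; ring
        rw [h, hx, mul_zero]
  have hsum : ∀ w : Fin k → PV p n,
      (∑ j, (if j = i₀ then (1 : ZMod p) else 0) • w j) = w i₀ := by
    intro w
    rw [Finset.sum_eq_single i₀]
    · simp
    · intro b _ hb; simp [hb]
    · intro h; exact absurd (Finset.mem_univ i₀) h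
  constructor
  · have hu : ξ' i ∈ sympOrtho C := by
      refine hortho _ fun j hj => ?_
      rw [hagree j hj]; exact hξξ' j i
    have h1 := (hg (ξ' i) hu (0, fun j => if j = i₀ then 1 else 0)).mpr
    simp only [Pi.zero_apply, zero_smul, Finset.sum_const_zero, sub_zero, hsum,
      hlast] at h1
    have h2 := h1 (by simp)
    have := C.neg_mem h2
    simpa [neg_sub] using this
  · have hu : η' i ∈ sympOrtho C := by
      refine hortho _ fun j hj => ?_
      rw [hagree j hj, hξη' j i, if_neg]
      intro h; rw [h] at hj; omega
    have h1 := (hg (η' i) hu (fun j => if j = i₀ then 1 else 0, 0)).mpr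
    simp only [Pi.zero_apply, zero_smul, Finset.sum_const_zero, sub_zero, hsum,
      hlast] at h1
    have h2 := h1 (by simp)
    have := C.neg_mem h2
    simpa [neg_sub] using this
end
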